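/- If P is a nonzero prime 𝔇*-stable ideal of R, then χ ∈ P. -/

import Mathlib

/-!
Write `η = Y² - (31/38500) X² Z`. The matrix `M = (D (X k))` of `d*, e*, f*` has determinant
`(1715/22) · χ · Y · η`. Every derivation satisfies `D p = ∑ₖ D (X k) · ∂ₖ p`, so for `p ∈ P` nonzero
of minimal total degree `M · ∇p ∈ P³`, and the adjugate gives `det M · ∂ᵢ p ∈ P` for all `i`. In
characteristic zero some `∂ᵢ p` is nonzero, hence of smaller degree and not in `P`; so `det M ∈ P`.

If `Y ∈ P`, then `f*(Y) = Z (7/2 X Y² - 33/10 Z²)` forces `Z ∈ P`, and `χ ∈ (Y, Z)`. If `η ∈ P`, then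
`d*(η) ≡ X Y Z θ` modulo `η`, and `e*(η) ≡ c X¹⁰` (`c ≠ 0`) modulo `η` and `θ`; so `X`, `Y` or `Z`
lies in `P`, and since `Y² ≡ (31/38500) X² Z` modulo `η`, in each case `Y ∈ P`.
-/

noncomputable section

open MvPolynomial

/-- `R = ℂ[X, Y, Z]`, with `X = X 0`, `Y = X 1`, `Z = X 2`. -/
abbrev R3 : Type := MvPolynomial (Fin 3) ℂ

def dstar : Derivation ℂ R3 R3 :=
  MvPolynomial.mkDerivation ℂ
    ![C (4/5) * X 1 * ((X 0) ^ 3 - C 1050 * X 2),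
      C (1/10) * X 0 * (C 7 * (X 2) ^ 2 - C 15 * X 0 * (X 1) ^ 2),
      -(C (2/5)) * X 1 * ((X 0) ^ 2 * X 2 + C 875 * (X 1) ^ 2)]

def estar : Derivation ℂ R3 R3 :=
  MvPolynomial.mkDerivation ℂ
    ![-(C 1152) * (X 2) ^ 2 + C 240 * X 0 * (X 1) ^ 2 + C (4/5) * (X 0) ^ 3 * X 2,
      X 1 * (-(C (6/5)) * (X 0) ^ 2 * X 2 + C 200 * (X 1) ^ 2),
      -(C 240) * (X 1) ^ 2 * X 2 - C (8/5) * (X 0) ^ 2 * (X 2) ^ 2 + C (4/5) * (X 0) ^ 3 * (X 1) ^ 2]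

def fstar : Derivation ℂ R3 R3 :=
  MvPolynomial.mkDerivation ℂ
    ![X 1 * (C 550 * (X 1) ^ 2 - C (4/5) * (X 0) ^ 2 * X 2),
      X 2 * (C (7/2) * X 0 * (X 1) ^ 2 - C (33/10) * (X 2) ^ 2),
      X 1 * (C (11/4) * (X 0) ^ 2 * (X 1) ^ 2 - C (59/20) * X 0 * (X 2) ^ 2)]

def chi : R3 :=
  C (484/49) * (C 50000 * (X 1) ^ 6 - C 1000 * (X 0) ^ 2 * X 2 * (X 1) ^ 4
    + (X 0) ^ 5 * (X 1) ^ 4 - C 2 * (X 0) ^ 4 * (X 2) ^ 2 * (X 1) ^ 2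
    + C 1800 * X 0 * (X 2) ^ 3 * (X 1) ^ 2 + (X 0) ^ 3 * (X 2) ^ 4 - C 864 * (X 2) ^ 5)

def DStarStable (I : Ideal R3) : Prop :=
  (∀ p ∈ I, dstar p ∈ I) ∧ (∀ p ∈ I, estar p ∈ I) ∧ (∀ p ∈ I, fstar p ∈ I)

namespace MvPolynomial

variable {σ R K : Type*} [CommSemiring R] [Field K]

theorem totalDegree_pderiv_lt {p : MvPolynomial σ R} (h : p.totalDegree ≠ 0) (i : σ) :
    (pderiv i p).totalDegree < p.totalDegree := by
  rw [totalDegree, Finset.sup_lt_iff (Nat.pos_of_ne_zero h)]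
  intro m hm
  have hc : coeff (m + Finsupp.single i 1) p ≠ 0 := fun hz =>
    mem_support_iff.mp hm (by rw [coeff_pderiv, hz, zero_mul])
  calc m.sum (fun _ e => e) < (m + Finsupp.single i 1).sum (fun _ e => e) := by
        rw [Finsupp.sum_add_index' (fun _ => rfl) (fun _ _ _ => rfl),
          Finsupp.sum_single_index rfl]
        exact Nat.lt_succ_self _
    _ ≤ p.totalDegree := le_totalDegree (mem_support_iff.mpr hc)

theorem exists_pderiv_ne_zero [NoZeroDivisors R] [CharZero R] {p : MvPolynomial σ R}
    (h : p.totalDegree ≠ 0) : ∃ i, pderiv i p ≠ 0 := by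
  obtain ⟨m, hm, i, hi⟩ : ∃ m ∈ p.support, ∃ i, m i ≠ 0 := by
    by_contra! hcon
    exact h ((totalDegree_eq_zero_iff σ p).mpr hcon)
  refine ⟨i, fun h0 => ?_⟩
  have hc := coeff_pderiv (i := i) p (m - Finsupp.single i 1)
  rw [h0, coeff_zero, tsub_add_cancel_of_le (Finsupp.single_le_iff.mpr
    (Nat.one_le_iff_ne_zero.mpr hi))] at hc
  exact mem_support_iff.mp hm ((mul_eq_zero.mp hc.symm).resolve_right
    (Nat.cast_add_one_ne_zero _))

theorem derivation_eq_sum_pderiv [Fintype σ]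
    (D : Derivation R (MvPolynomial σ R) (MvPolynomial σ R)) (p : MvPolynomial σ R) :
    D p = ∑ i, D (X i) * pderiv i p := by
  classical
  let E : Derivation R (MvPolynomial σ R) (MvPolynomial σ R) := ∑ i, D (X i) • pderiv i
  have hE : ∀ q, E q = ∑ i, D (X i) * pderiv i q := fun q => by
    simp only [E, ← Derivation.coeFnAddMonoidHom_apply, map_sum, Finset.sum_apply]
    rfl
  have hD : D = E := derivation_ext fun j => by simp [hE, pderiv_X, Pi.single_apply]
  exact (congrArg (· p) hD).trans (hE p)

theorem exists_pderiv_notMem [CharZero K] {P : Ideal (MvPolynomial σ K)}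
    (hP : P ≠ ⊤) (hP0 : P ≠ ⊥) : ∃ p ∈ P, ∃ i, pderiv i p ∉ P := by
  classical
  have hex : ∃ n, ∃ p ∈ P, p ≠ 0 ∧ p.totalDegree = n := by
    obtain ⟨p, hp, hp0⟩ := Submodule.exists_mem_ne_zero_of_ne_bot hP0
    exact ⟨_, p, hp, hp0, rfl⟩
  obtain ⟨p, hp, hp0, hdeg⟩ := Nat.find_spec hex
  have hdeg0 : p.totalDegree ≠ 0 := by
    intro h0
    rw [totalDegree_eq_zero_iff_eq_C] at h0
    have hc : coeff 0 p ≠ 0 := fun hz => hp0 (by rw [h0, hz, map_zero])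
    exact hP (P.eq_top_of_isUnit_mem hp (h0 ▸ (isUnit_iff_ne_zero.mpr hc).map C))
  obtain ⟨i, hi⟩ := exists_pderiv_ne_zero hdeg0
  refine ⟨p, hp, i, fun hmem => ?_⟩
  have := Nat.find_min' hex ⟨_, hmem, hi, rfl⟩
  have := totalDegree_pderiv_lt hdeg0 i
  omega

theorem C_mul_mem_iff {P : Ideal (MvPolynomial σ K)} {a : K} (ha : a ≠ 0)
    {p : MvPolynomial σ K} : C a * p ∈ P ↔ p ∈ P :=
  P.unit_mul_mem_iff_mem ((isUnit_iff_ne_zero.mpr ha).map C)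

def derivationMatrix (D : σ → Derivation R (MvPolynomial σ R) (MvPolynomial σ R)) :
    Matrix σ σ (MvPolynomial σ R) :=
  Matrix.of fun j k => D j (X k)

theorem det_derivationMatrix_mem_of_isPrime [CharZero K] [Fintype σ] [DecidableEq σ]
    {P : Ideal (MvPolynomial σ K)} (hP : P.IsPrime) (hP0 : P ≠ ⊥)
    (D : σ → Derivation K (MvPolynomial σ K) (MvPolynomial σ K))
    (hD : ∀ j, ∀ p ∈ P, D j p ∈ P) : (derivationMatrix D).det ∈ P := by
  set M := derivationMatrix D
  obtain ⟨p, hp, i, hi⟩ := exists_pderiv_notMem hP.ne_top hP0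
  have hM : M.mulVec (fun k => pderiv k p) = fun j => D j p :=
    _root_.funext fun j => by
      simp only [Matrix.mulVec, dotProduct, M, derivationMatrix, Matrix.of_apply]
      exact (derivation_eq_sum_pderiv (D j) p).symm
  have hadj : M.det • (fun k => pderiv k p) = M.adjugate.mulVec fun j => D j p := by
    rw [← hM, Matrix.mulVec_mulVec, Matrix.adjugate_mul, Matrix.smul_mulVec, Matrix.one_mulVec]
  have hmem : M.det * pderiv i p ∈ P := by
    rw [← smul_eq_mul, ← Pi.smul_apply (M.det) (fun k => pderiv k p) i, hadj]
    exact Ideal.sum_mem _ fun j _ => P.mul_mem_left _ (hD j p hp)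
  exact (hP.mem_or_mem hmem).resolve_right hi

end MvPolynomial

def eta : R3 := X 1 ^ 2 - C (31/38500) * X 0 ^ 2 * X 2

def theta : R3 := C (757/275) * X 2 - C (13361/4235000) * X 0 ^ 3

theorem det_derivationMatrix_dstar_estar_fstar :
    (derivationMatrix ![dstar, estar, fstar]).det = C (1715/22) * (chi * (X 1 * eta)) := by
  rw [Matrix.det_fin_three]
  simp only [derivationMatrix, Matrix.of_apply, dstar, estar, fstar, mkDerivation_X, chi, eta,
    Matrix.cons_val_zero, Matrix.cons_val_one, Matrix.cons_val_two]
  apply MvPolynomial.funext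
  intro x
  simp
  ring

theorem dstar_eta : dstar eta = X 0 * X 1 * X 2 * theta + C (-299/110) * X 0 ^ 2 * X 1 * eta := by
  simp only [dstar, eta, theta, map_sub, Derivation.leibniz, Derivation.leibniz_pow, mkDerivation_X,
    smul_eq_mul, Matrix.cons_val_zero, Matrix.cons_val_one, Matrix.cons_val_two]
  apply MvPolynomial.funext
  intro x
  simp
  ring

theorem estar_eta : estar eta = (C (-4372/1925) * X 0 ^ 2 * X 2 + C 400 * X 1 ^ 2
      + C (-31/48125) * X 0 ^ 5) * eta
    + (C (17856/26495) * X 0 * X 2 ^ 2 + C (4172321/38609176375) * X 0 ^ 4 * X 2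
      + C (-1162457313/18003922253779000) * X 0 ^ 7) * theta
    + C (-15531592158993/76246610744754065000000) * X 0 ^ 10 := by
  simp only [estar, eta, theta, map_sub, Derivation.leibniz, Derivation.leibniz_pow, mkDerivation_X,
    smul_eq_mul, Matrix.cons_val_zero, Matrix.cons_val_one, Matrix.cons_val_two]
  apply MvPolynomial.funext
  intro x
  simp
  ring

theorem fstar_X1 : fstar (X 1) = X 2 * (C (7/2) * X 0 * X 1 ^ 2 - C (33/10) * X 2 ^ 2) := by
  simp [fstar, mkDerivation_X]

theorem chi_mem_span_X1_X2 : chi ∈ Ideal.span {X 1, X 2} :=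
  Ideal.mem_span_pair.mpr ⟨C (484/49) * (C 50000 * X 1 ^ 5 - C 1000 * X 0 ^ 2 * X 2 * X 1 ^ 3
      + X 0 ^ 5 * X 1 ^ 3 - C 2 * X 0 ^ 4 * X 2 ^ 2 * X 1 + C 1800 * X 0 * X 2 ^ 3 * X 1),
    C (484/49) * (X 0 ^ 3 * X 2 ^ 3 - C 864 * X 2 ^ 4), by rw [chi]; ring⟩

section

variable {P : Ideal R3}

theorem X2_mem_of_X1_mem (hP : P.IsPrime) (hst : DStarStable P) (hY : X 1 ∈ P) : X 2 ∈ P := by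
  have hZ3 : C (33/10) * X 2 ^ 3 = C (7/2) * X 0 * X 1 * X 2 * X 1 - fstar (X 1) := by
    rw [fstar_X1]
    ring
  refine hP.mem_of_pow_mem 3 ((C_mul_mem_iff (a := 33/10) (by norm_num)).mp ?_)
  rw [hZ3]
  exact sub_mem (P.mul_mem_left _ hY) (hst.2.2 _ hY)

theorem chi_mem_of_X1_mem (hP : P.IsPrime) (hst : DStarStable P) (hY : X 1 ∈ P) : chi ∈ P :=
  Ideal.span_le.mpr (Set.pair_subset hY (X2_mem_of_X1_mem hP hst hY)) chi_mem_span_X1_X2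

theorem X1_mem_of_X0_sq_mul_X2_mem (hP : P.IsPrime) (hη : eta ∈ P) (h : X 0 ^ 2 * X 2 ∈ P) :
    X 1 ∈ P := by
  refine hP.mem_of_pow_mem 2 ?_
  rw [show X 1 ^ 2 = eta + C (31/38500) * (X 0 ^ 2 * X 2) by rw [eta]; ring]
  exact add_mem hη (P.mul_mem_left _ h)

theorem X0_mem_of_theta_mem (hP : P.IsPrime) (hst : DStarStable P) (hη : eta ∈ P)
    (hθ : theta ∈ P) : X 0 ∈ P := by
  have he := hst.2.1 _ hη
  rw [estar_eta, Submodule.add_mem_iff_right _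
    (add_mem (P.mul_mem_left _ hη) (P.mul_mem_left _ hθ)), C_mul_mem_iff (by norm_num)] at he
  exact hP.mem_of_pow_mem 10 he

theorem X1_mem_of_eta_mem (hP : P.IsPrime) (hst : DStarStable P) (hη : eta ∈ P) : X 1 ∈ P := by
  have hd := hst.1 _ hη
  rw [dstar_eta, Submodule.add_mem_iff_left _ (P.mul_mem_left _ hη)] at hd
  have hX : X 0 ∈ P → X 1 ∈ P := fun hX =>
    X1_mem_of_X0_sq_mul_X2_mem hP hη (P.mul_mem_right _ (P.pow_mem_of_mem hX 2 two_pos))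
  rcases hP.mem_or_mem hd with hXYZ | hθ
  · rcases hP.mem_or_mem hXYZ with hXY | hZ
    · exact (hP.mem_or_mem hXY).elim hX id
    · exact X1_mem_of_X0_sq_mul_X2_mem hP hη (P.mul_mem_left _ hZ)
  · exact hX (X0_mem_of_theta_mem hP hst hη hθ)

end

/-- Every nonzero prime `𝔇*`-stable ideal of `R = ℂ[X, Y, Z]` contains `χ`. -/
theorem chi_mem_of_prime_stable (P : Ideal R3) (hP : P.IsPrime) (hP0 : P ≠ ⊥)
    (hst : DStarStable P) : chi ∈ P := by
  have hdet := det_derivationMatrix_mem_of_isPrime hP hP0 ![dstar, estar, fstar] fun j => by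
    fin_cases j
    exacts [hst.1, hst.2.1, hst.2.2]
  rw [det_derivationMatrix_dstar_estar_fstar, C_mul_mem_iff (by norm_num)] at hdet
  rcases hP.mem_or_mem hdet with hchi | hYη
  · exact hchi
  rcases hP.mem_or_mem hYη with hY | hη
  · exact chi_mem_of_X1_mem hP hst hY
  · exact chi_mem_of_X1_mem hP hst (X1_mem_of_eta_mem hP hst hη)
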